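/- Let W = {1} ∪ ⋃_{k=4}^{∞} {n ∈ ℤ : 2^k + 9 ≤ n < 2^{k+1}}. Then there does not exist a minimal additive complement to W. -/

import Mathlib

/-!
Every element of `W` is positive, so a complement `C` of `W` is unbounded below, and minimality
gives each `c ∈ C` a witness `x c` that is represented as `c + w` and by no other element of `C`.
For two such witnesses and a very negative `d ∈ C`, the integers `x c₁ - d` and `x c₂ - d` lie
outside `W`, hence in gaps `[2^j, 2^j + 8]` of `W`; as `d → -∞` these numbers grow while their
difference stays fixed, so they must share a gap and `|x c₁ - x c₂| ≤ 8`. Witnesses of distinct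
elements are distinct, so infinitely many integers would fit in an interval of length `8`.
-/

open Pointwise

/-- `C` is a minimal additive complement to `W`: `C + W = ℤ` and no proper
subset of `C` is an additive complement to `W`. -/
def IsMinAddComplement (C W : Set ℤ) : Prop :=
  C + W = Set.univ ∧ ∀ C' ⊂ C, C' + W ≠ Set.univ

theorem not_bddBelow_of_add_eq_univ {α : Type*} [AddCommGroup α] [LinearOrder α]
    [IsOrderedAddMonoid α] [NoMinOrder α] {C W : Set α} (hCW : C + W = Set.univ)
    (hW : BddBelow W) : ¬ BddBelow C := by
  rintro ⟨a, ha⟩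
  obtain ⟨b, hb⟩ := hW
  obtain ⟨y, hy⟩ := exists_lt (a + b)
  obtain ⟨c, hc, w, hw, rfl⟩ := Set.mem_add.1 (hCW ▸ Set.mem_univ y)
  exact hy.not_ge (add_le_add (ha hc) (hb hw))

theorem IsMinAddComplement.exists_unique_sub_mem {C W : Set ℤ} (h : IsMinAddComplement C W)
    {c : ℤ} (hc : c ∈ C) : ∃ x, x - c ∈ W ∧ ∀ c' ∈ C, x - c' ∈ W → c' = c := by
  have hssub : C \ {c} ⊂ C := Set.sdiff_singleton_ssubset.2 hc
  obtain ⟨x, hx⟩ := (Set.ne_univ_iff_exists_notMem _).1 (h.2 _ hssub)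
  have hrepr : ∀ c' ∈ C, x - c' ∈ W → c' = c := fun c' hc' hxc' => by
    by_contra hne
    exact hx (Set.mem_add.2 ⟨c', ⟨hc', hne⟩, x - c', hxc', add_sub_cancel c' x⟩)
  obtain ⟨c₀, hc₀, w, hw, rfl⟩ := Set.mem_add.1 (h.1 ▸ Set.mem_univ x)
  obtain rfl := hrepr c₀ hc₀ (by simpa using hw)
  exact ⟨c₀ + w, by simpa using hw, hrepr⟩

def blockSet : Set ℤ :=
  {1} ∪ {n : ℤ | ∃ k : ℕ, 4 ≤ k ∧ 2 ^ k + 9 ≤ n ∧ n < 2 ^ (k + 1)}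

theorem one_le_of_mem_blockSet {n : ℤ} (hn : n ∈ blockSet) : 1 ≤ n := by
  rcases hn with rfl | ⟨k, -, hk, -⟩
  · rfl
  · have : (0 : ℤ) < 2 ^ k := by positivity
    omega

theorem exists_pow_le_le_add_of_notMem_blockSet {n : ℤ} (hn : 16 ≤ n) (hW : n ∉ blockSet) :
    ∃ j : ℕ, 2 ^ j ≤ n ∧ n ≤ 2 ^ j + 8 := by
  lift n to ℕ using (by omega)
  set j := Nat.log 2 n
  have hlow : 2 ^ j ≤ n := Nat.pow_log_le_self 2 (by omega)
  have hhigh : n < 2 ^ (j + 1) := Nat.lt_pow_succ_log_self (by norm_num) n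
  have hj : 4 ≤ j := by
    by_contra! hj
    have : 2 ^ (j + 1) ≤ 2 ^ 4 := Nat.pow_le_pow_right (by norm_num) (by omega)
    omega
  refine ⟨j, by exact_mod_cast hlow, ?_⟩
  by_contra! hgap
  exact hW (Or.inr ⟨j, hj, by omega, by exact_mod_cast hhigh⟩)

theorem abs_sub_le_of_notMem_blockSet {a b : ℤ} (ha : 16 ≤ a) (hb : 16 ≤ b)
    (haW : a ∉ blockSet) (hbW : b ∉ blockSet) (hab : b + 16 < 2 * a) (hba : a + 16 < 2 * b) :
    |a - b| ≤ 8 := by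
  obtain ⟨i, hia, hai⟩ := exists_pow_le_le_add_of_notMem_blockSet ha haW
  obtain ⟨j, hjb, hbj⟩ := exists_pow_le_le_add_of_notMem_blockSet hb hbW
  have two_mul_pow_le {i j : ℕ} (hij : i < j) : 2 * (2 : ℤ) ^ i ≤ 2 ^ j := by
    rw [← pow_succ']
    exact pow_le_pow_right₀ (by norm_num) hij
  rcases lt_trichotomy i j with hij | rfl | hji
  · linarith [two_mul_pow_le hij]
  · rw [abs_sub_le_iff]
    constructor <;> linarith
  · linarith [two_mul_pow_le hji]

theorem abs_sub_le_of_unique_sub_mem_blockSet {C : Set ℤ} (hC : ¬ BddBelow C)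
    {c₁ c₂ x₁ x₂ : ℤ} (h₁ : ∀ c ∈ C, x₁ - c ∈ blockSet → c = c₁)
    (h₂ : ∀ c ∈ C, x₂ - c ∈ blockSet → c = c₂) :
    |x₁ - x₂| ≤ 8 := by
  obtain ⟨d, hd, hdlt⟩ := not_bddBelow_iff.1 hC
    (min (min c₁ c₂) (min (min (x₁ - 16) (x₂ - 16))
      (min (2 * x₁ - x₂ - 16) (2 * x₂ - x₁ - 16))))
  have hd₁ : x₁ - d ∉ blockSet := fun hmem => by have := h₁ d hd hmem; omega
  have hd₂ : x₂ - d ∉ blockSet := fun hmem => by have := h₂ d hd hmem; omega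
  simpa using abs_sub_le_of_notMem_blockSet (by omega) (by omega) hd₁ hd₂ (by omega) (by omega)

/-- The set `W = {1} ∪ ⋃_{k ≥ 4} [2^k + 9, 2^(k+1))` has no
minimal additive complement. -/
theorem stmt5 (W : Set ℤ)
    (hW : W = {1} ∪ {n : ℤ | ∃ k : ℕ, 4 ≤ k ∧ 2 ^ k + 9 ≤ n ∧ n < 2 ^ (k + 1)}) :
    ¬ ∃ C : Set ℤ, IsMinAddComplement C W := by
  rintro ⟨C, hmin⟩
  change W = blockSet at hW
  subst hW
  have hC : ¬ BddBelow C :=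
    not_bddBelow_of_add_eq_univ hmin.1 ⟨1, fun _ => one_le_of_mem_blockSet⟩
  choose! x hxW hxuniq using fun c (hc : c ∈ C) => hmin.exists_unique_sub_mem hc
  have hinj : Set.InjOn x C := fun c hc c' hc' hxx =>
    hxuniq c' hc' c hc (hxx ▸ hxW c hc)
  have hinf : (x '' C).Infinite := (Set.infinite_of_not_bddBelow hC).image hinj
  obtain ⟨c₀, hc₀⟩ := hinf.nonempty.of_image
  refine hinf ((Set.finite_Icc (x c₀ - 8) (x c₀ + 8)).subset ?_)
  rintro _ ⟨c, hc, rfl⟩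
  have := abs_sub_le_iff.1 <|
    abs_sub_le_of_unique_sub_mem_blockSet hC (hxuniq c hc) (hxuniq c₀ hc₀)
  exact ⟨by omega, by omega⟩
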